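/- arXiv:1209.0587 — 3 statements merged into one kernel-verified Lean document; each statement's English description precedes it below -/
import Mathlib

section
/- The monoid 𝓘↗∞(ℤ) is a simple semigroup: for all elements γ and φ of 𝓘↗∞(ℤ) there exist κ, ξ ∈ 𝓘↗∞(ℤ) such that κ·φ·ξ = γ. Consequently it has no proper two-sided ideals. -/
/-- A monotone injective partial self-map of `ℤ` with cofinite domain and cofinite range,
encoded as a function `ℤ → Option ℤ` where `none` means "undefined". -/
structure IsMIP (f : ℤ → Option ℤ) : Prop where
  inj : ∀ ⦃x y a : ℤ⦄, f x = some a → f y = some a → x = y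
  mono : ∀ ⦃x y a b : ℤ⦄, f x = some a → f y = some b → x ≤ y → a ≤ b
  cofin_dom : {x : ℤ | f x = none}.Finite
  cofin_ran : {y : ℤ | ∀ x : ℤ, f x ≠ some y}.Finite

/-- The monoid `𝓘↗∞(ℤ)` of monotone injective partial self-maps of `ℤ`
with cofinite domain and cofinite range. -/
def IZ : Type := {f : ℤ → Option ℤ // IsMIP f}

namespace IZ

/-- Composition of partial maps, written left-to-right: `(pcomp f g) x = g (f x)`. -/
def pcomp (f g : ℤ → Option ℤ) : ℤ → Option ℤ := fun x => (f x).bind g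

theorem isMIP_id : IsMIP (fun x : ℤ => some x) := by
  refine ⟨?_, ?_, ?_, ?_⟩
  · intro x y a hx hy; simp_all
  · intro x y a b hx hy h; simp_all
  · simp
  · have : {y : ℤ | ∀ x : ℤ, (fun x : ℤ => some x) x ≠ some y} = ∅ := by
      ext y; simp
    rw [this]; exact Set.finite_empty

theorem isMIP_comp {f g : ℤ → Option ℤ} (hf : IsMIP f) (hg : IsMIP g) :
    IsMIP (pcomp f g) := by
  refine ⟨?_, ?_, ?_, ?_⟩
  · intro x y a hx hy
    rw [pcomp, Option.bind_eq_some_iff] at hx hy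
    obtain ⟨b, hb, hba⟩ := hx
    obtain ⟨c, hc, hca⟩ := hy
    have hbc : b = c := hg.inj hba hca
    subst hbc
    exact hf.inj hb hc
  · intro x y a b hx hy hxy
    rw [pcomp, Option.bind_eq_some_iff] at hx hy
    obtain ⟨p, hp, hpa⟩ := hx
    obtain ⟨q, hq, hqb⟩ := hy
    exact hg.mono hpa hqb (hf.mono hp hq hxy)
  · have hsub : {x : ℤ | pcomp f g x = none} ⊆
        {x : ℤ | f x = none} ∪ f ⁻¹' (Option.some '' {a : ℤ | g a = none}) := by
      intro x hx
      simp only [Set.mem_setOf_eq, pcomp] at hx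
      cases hfx : f x with
      | none => exact Or.inl hfx
      | some a =>
        right
        rw [hfx] at hx
        simp only [Option.bind_some] at hx
        exact ⟨a, hx, hfx.symm⟩
    refine Set.Finite.subset (Set.Finite.union hf.cofin_dom ?_) hsub
    refine Set.Finite.preimage ?_ (hg.cofin_dom.image _)
    intro x hx y hy hxy
    obtain ⟨a, _, ha⟩ := hx
    obtain ⟨b, _, hb⟩ := hy
    have hfa : f x = some a := ha.symm
    have hfb : f y = some b := hb.symm
    have : some a = some b := by rw [← hfa, ← hfb, hxy]
    rw [Option.some_inj] at this
    subst this
    exact hf.inj hfa hfb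
  · have hsub : {y : ℤ | ∀ x : ℤ, pcomp f g x ≠ some y} ⊆
        {y : ℤ | ∀ x : ℤ, g x ≠ some y} ∪
          ((fun a => (g a).getD 0) '' {a : ℤ | ∀ x : ℤ, f x ≠ some a}) := by
      intro y hy
      simp only [Set.mem_setOf_eq] at hy
      by_cases hgy : ∀ a : ℤ, g a ≠ some y
      · exact Or.inl hgy
      · push_neg at hgy
        obtain ⟨a, hga⟩ := hgy
        right
        refine ⟨a, ?_, by simp [hga]⟩
        intro x hfx
        exact hy x (by simp [pcomp, hfx, hga])
    exact Set.Finite.subset (Set.Finite.union hg.cofin_ran (hf.cofin_ran.image _)) hsub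

instance : Monoid IZ where
  one := ⟨fun x => some x, isMIP_id⟩
  mul a b := ⟨pcomp a.1 b.1, isMIP_comp a.2 b.2⟩
  mul_assoc a b c := by
    apply Subtype.ext
    funext x
    exact Option.bind_assoc (a.1 x) b.1 c.1
  one_mul a := by
    apply Subtype.ext
    funext x
    rfl
  mul_one a := by
    apply Subtype.ext
    funext x
    show (a.1 x).bind some = a.1 x
    cases a.1 x <;> rfl

theorem mul_def (a b : IZ) : (a * b).1 = pcomp a.1 b.1 := rfl

theorem one_def : (1 : IZ).1 = fun x : ℤ => some x := rfl

/-- The domain of an element of `𝓘↗∞(ℤ)`. -/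
def dom (a : IZ) : Set ℤ := {x : ℤ | a.1 x ≠ none}

/-- The range of an element of `𝓘↗∞(ℤ)`. -/
def ran (a : IZ) : Set ℤ := {y : ℤ | ∃ x : ℤ, a.1 x = some y}

end IZ

/-!
Every element `φ` becomes total after precomposing with a suitable element `κ`: take `κ` to be
`x ↦ x + N` on `x ≥ 0` and `x ↦ x - N` on `x < 0`, which skips the interval `[-N, N)` containing
the finitely many points outside the domain of `φ`. A total `ψ = κ φ` has a right inverse, its
partial inverse `ψ⁻¹`, so `κ φ (ψ⁻¹ γ) = γ`. Simplicity then absorbs every element into any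
two-sided ideal.
-/

theorem IsMIP.le_of_le {f : ℤ → Option ℤ} (hf : IsMIP f) {x y a b : ℤ}
    (hx : f x = some a) (hy : f y = some b) (hab : a ≤ b) : x ≤ y := by
  by_contra! hyx
  have hba : b ≤ a := hf.mono hy hx hyx.le
  have : x = y := hf.inj hx (le_antisymm hab hba ▸ hy)
  omega

theorem IsMIP.of_strictMono {k : ℤ → ℤ} (hk : StrictMono k) (hran : (Set.range k)ᶜ.Finite) :
    IsMIP (fun x => some (k x)) where
  inj x y a hx hy := hk.injective (Option.some_inj.mp (hx.trans hy.symm))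
  mono x y a b hx hy hxy := by
    rw [Option.some_inj] at hx hy
    exact hx ▸ hy ▸ hk.monotone hxy
  cofin_dom := by simp
  cofin_ran := by simpa [Set.compl_def] using hran

theorem Set.Finite.exists_subset_Ico_neg {s : Set ℤ} (hs : s.Finite) :
    ∃ N : ℤ, 0 ≤ N ∧ s ⊆ Set.Ico (-N) N := by
  obtain ⟨U, hU⟩ := hs.bddAbove
  obtain ⟨L, hL⟩ := hs.bddBelow
  refine ⟨|U| + |L| + 1, by positivity, fun x hx => ?_⟩
  constructor <;> linarith [hU hx, hL hx, le_abs_self U, neg_abs_le L, abs_nonneg U, abs_nonneg L]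

theorem Set.eq_univ_of_mul_mem_of_mul_mem {M : Type*} [Mul M]
    (hsimple : ∀ γ φ : M, ∃ κ ξ : M, κ * φ * ξ = γ) {I : Set M} (hne : I.Nonempty)
    (hI : ∀ a ∈ I, ∀ s : M, s * a ∈ I ∧ a * s ∈ I) : I = Set.univ := by
  obtain ⟨a, ha⟩ := hne
  refine Set.eq_univ_of_forall fun γ => ?_
  obtain ⟨κ, ξ, rfl⟩ := hsimple γ a
  exact (hI _ (hI a ha κ).1 ξ).2

namespace IZ

open Classical in
noncomputable def pinv (f : ℤ → Option ℤ) : ℤ → Option ℤ :=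
  fun y => if h : ∃ x, f x = some y then some h.choose else none

theorem pinv_eq_none_iff {f : ℤ → Option ℤ} {y : ℤ} : pinv f y = none ↔ ∀ x, f x ≠ some y := by
  simp [pinv]

theorem pinv_eq_some_iff {f : ℤ → Option ℤ}
    (hf : ∀ ⦃x y a : ℤ⦄, f x = some a → f y = some a → x = y) {x y : ℤ} :
    pinv f y = some x ↔ f x = some y := by
  unfold pinv
  split_ifs with h
  · exact ⟨fun hx => Option.some_inj.mp hx ▸ h.choose_spec,
      fun hx => congrArg some (hf h.choose_spec hx)⟩
  · simpa using fun hx => h ⟨x, hx⟩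

theorem isMIP_pinv {f : ℤ → Option ℤ} (hf : IsMIP f) : IsMIP (pinv f) where
  inj y₁ y₂ x h₁ h₂ := by
    rw [pinv_eq_some_iff hf.inj] at h₁ h₂
    exact Option.some_inj.mp (h₁.symm.trans h₂)
  mono y₁ y₂ x₁ x₂ h₁ h₂ hy := by
    rw [pinv_eq_some_iff hf.inj] at h₁ h₂
    exact hf.le_of_le h₁ h₂ hy
  cofin_dom := by simpa only [pinv_eq_none_iff] using hf.cofin_ran
  cofin_ran := by
    refine hf.cofin_dom.subset fun x hx => ?_
    cases hfx : f x with
    | none => exact hfx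
    | some y => exact absurd ((pinv_eq_some_iff hf.inj).mpr hfx) (hx y)

noncomputable instance : Inv IZ where
  inv a := ⟨pinv a.1, isMIP_pinv a.2⟩

theorem mul_inv_cancel_of_dom_eq_univ {a : IZ} (ha : a.dom = Set.univ) : a * a⁻¹ = 1 := by
  refine Subtype.ext (funext fun x => ?_)
  obtain ⟨y, hy⟩ := Option.ne_none_iff_exists'.mp (Set.eq_univ_iff_forall.mp ha x)
  change (a.1 x).bind (pinv a.1) = some x
  rw [hy, Option.bind_some, pinv_eq_some_iff a.2.inj, hy]

def ofStrictMono (k : ℤ → ℤ) (hk : StrictMono k) (hran : (Set.range k)ᶜ.Finite) : IZ :=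
  ⟨fun x => some (k x), IsMIP.of_strictMono hk hran⟩

theorem ofStrictMono_mul_apply (k : ℤ → ℤ) (hk : StrictMono k) (hran : (Set.range k)ᶜ.Finite)
    (a : IZ) (x : ℤ) : (ofStrictMono k hk hran * a).1 x = a.1 (k x) :=
  rfl

def spread (N x : ℤ) : ℤ := if 0 ≤ x then x + N else x - N

theorem strictMono_spread {N : ℤ} (hN : 0 ≤ N) : StrictMono (spread N) := by
  intro x y hxy
  unfold spread
  split_ifs <;> omega

theorem spread_notMem_Ico (N x : ℤ) : spread N x ∉ Set.Ico (-N) N := by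
  unfold spread
  split_ifs <;> simp only [Set.mem_Ico] <;> omega

theorem compl_range_spread_subset (N : ℤ) : (Set.range (spread N))ᶜ ⊆ Set.Ico (-N) N := by
  intro y hy
  simp only [Set.mem_compl_iff, Set.mem_range, not_exists] at hy
  have h₁ := hy (y - N)
  have h₂ := hy (y + N)
  unfold spread at h₁ h₂
  split_ifs at h₁ h₂ <;> simp only [Set.mem_Ico] <;> omega

theorem exists_dom_mul_eq_univ (a : IZ) : ∃ κ : IZ, (κ * a).dom = Set.univ := by
  obtain ⟨N, hN, hsub⟩ := a.2.cofin_dom.exists_subset_Ico_neg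
  have hran : (Set.range (spread N))ᶜ.Finite :=
    (Set.finite_Ico (-N) N).subset (compl_range_spread_subset N)
  refine ⟨ofStrictMono (spread N) (strictMono_spread hN) hran,
    Set.eq_univ_of_forall fun x hx => ?_⟩
  rw [ofStrictMono_mul_apply] at hx
  exact spread_notMem_Ico N x (hsub hx)

theorem exists_mul_mul_eq (γ φ : IZ) : ∃ κ ξ : IZ, κ * φ * ξ = γ := by
  obtain ⟨κ, hκ⟩ := exists_dom_mul_eq_univ φ
  refine ⟨κ, (κ * φ)⁻¹ * γ, ?_⟩
  rw [← mul_assoc, mul_inv_cancel_of_dom_eq_univ hκ, one_mul]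

end IZ

/-- The monoid `𝓘↗∞(ℤ)` is a simple semigroup: for all `γ, φ` there are
`κ, ξ` with `κ * φ * ξ = γ`; consequently it has no proper two-sided ideals. -/
theorem statement7 :
    (∀ γ φ : IZ, ∃ κ ξ : IZ, κ * φ * ξ = γ) ∧
      ∀ I : Set IZ, I.Nonempty → (∀ a ∈ I, ∀ s : IZ, s * a ∈ I ∧ a * s ∈ I) →
        I = Set.univ :=
  ⟨IZ.exists_mul_mul_eq, fun _ => Set.eq_univ_of_mul_mem_of_mul_mem IZ.exists_mul_mul_eq⟩
end

section
/- The group of units H(𝕀) of the monoid 𝓘↗∞(ℤ) is isomorphic to the additive group ℤ of integers; an isomorphism is given by α ↦ α(n) − n (this value being independent of n ∈ ℤ). -/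
theorem OrderIso.int_apply_eq_add (e : ℤ ≃o ℤ) (n : ℤ) : e n = n + e 0 := by
  have step (m : ℤ) : e (m + 1) = e m + 1 := by
    simpa only [Order.succ_eq_add_one] using e.map_succ m
  induction n using Int.induction_on with
  | zero => rw [zero_add]
  | succ m ih => rw [step, ih]; ring
  | pred m ih => rw [← add_left_inj 1, ← step, sub_add_cancel, ih]; ring

theorem IsMIP.strictMono_of_total {f : ℤ → Option ℤ} (hf : IsMIP f) {g : ℤ → ℤ}
    (hg : ∀ n, f n = some (g n)) : StrictMono g :=
  Monotone.strictMono_of_injective (fun _ _ hxy => hf.mono (hg _) (hg _) hxy)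
    fun x y hxy => hf.inj (hg x) (hxy ▸ hg y)

theorem isMIP_translate (c : ℤ) : IsMIP (fun n : ℤ => some (n + c)) where
  inj x y a hx hy := by simp only [Option.some_inj] at hx hy; omega
  mono x y a b hx hy hxy := by simp only [Option.some_inj] at hx hy; omega
  cofin_dom := by simp
  cofin_ran := by
    convert Set.finite_empty
    ext y
    simpa using ⟨y - c, sub_add_cancel y c⟩

namespace IZ

def translate (c : ℤ) : IZ := ⟨fun n => some (n + c), isMIP_translate c⟩

theorem translate_injective : Function.Injective translate := fun c d h => by
  simpa [translate] using congrFun (congrArg Subtype.val h) 0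

theorem translate_mul (c d : ℤ) : translate c * translate d = translate (c + d) :=
  Subtype.ext <| funext fun n => congrArg some (add_assoc n c d)

theorem translate_zero : translate 0 = 1 :=
  Subtype.ext <| funext fun n => congrArg some (add_zero n)

def translateUnit (c : ℤ) : Units IZ where
  val := translate c
  inv := translate (-c)
  val_inv := by rw [translate_mul, add_neg_cancel, translate_zero]
  inv_val := by rw [translate_mul, neg_add_cancel, translate_zero]

theorem exists_apply_eq_some_of_mul_eq_one {a b : IZ} (h : a * b = 1) (n : ℤ) :
    ∃ m, a.1 n = some m ∧ b.1 m = some n := by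
  have hn : (a * b).1 n = some n := by rw [h]; rfl
  exact Option.bind_eq_some_iff.mp hn

/-- `u * u⁻¹ = 1` makes `u` total and `u⁻¹ * u = 1` makes it surjective, so `u` is an order
automorphism of `ℤ`; these commute with the successor, hence are translations. -/
theorem exists_eq_translate (u : Units IZ) : ∃ c, (u : IZ) = translate c := by
  choose g hg using fun n => (exists_apply_eq_some_of_mul_eq_one u.mul_inv n).imp fun _ => And.left
  have hsurj : Function.Surjective g := fun y => by
    obtain ⟨m, -, hm⟩ := exists_apply_eq_some_of_mul_eq_one u.inv_mul y
    exact ⟨m, Option.some_inj.mp ((hg m).symm.trans hm)⟩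
  let e := ((u : IZ).2.strictMono_of_total hg).orderIsoOfSurjective g hsurj
  refine ⟨g 0, Subtype.ext <| funext fun n => ?_⟩
  rw [hg n]
  exact congrArg some (e.int_apply_eq_add n)

noncomputable def shift (u : Units IZ) : ℤ := (exists_eq_translate u).choose

theorem eq_translate_shift (u : Units IZ) : (u : IZ) = translate (shift u) :=
  (exists_eq_translate u).choose_spec

theorem shift_translateUnit (c : ℤ) : shift (translateUnit c) = c :=
  translate_injective (eq_translate_shift (translateUnit c)).symm

theorem shift_mul (u v : Units IZ) : shift (u * v) = shift u + shift v :=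
  translate_injective <| by
    rw [← eq_translate_shift, Units.val_mul, eq_translate_shift u, eq_translate_shift v,
      translate_mul]

theorem shift_injective : Function.Injective shift := fun u v h =>
  Units.ext <| by rw [eq_translate_shift u, eq_translate_shift v, h]

end IZ

/-- The group of units of `𝓘↗∞(ℤ)` is isomorphic to the additive group `ℤ`,
via the map `α ↦ α n - n` (this value being independent of `n`, i.e. `α n = n + h α`). -/
theorem statement9 :
    ∃ h : Units IZ → ℤ, Function.Bijective h ∧
      (∀ u v : Units IZ, h (u * v) = h u + h v) ∧
      ∀ (u : Units IZ) (n : ℤ), (u : IZ).1 n = some (n + h u) := by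
  refine ⟨IZ.shift, ⟨IZ.shift_injective, fun c => ⟨_, IZ.shift_translateUnit c⟩⟩, IZ.shift_mul,
    fun u n => ?_⟩
  rw [IZ.eq_translate_shift u]
  rfl
end

section
/- The monoid 𝓘↗∞(ℤ) is bisimple: any two elements α, β of 𝓘↗∞(ℤ) are Green 𝓓-equivalent, i.e. there exists γ ∈ 𝓘↗∞(ℤ) with α 𝓛 γ and γ 𝓡 β (where α 𝓛 γ means there exist χ, ζ with χ·α = γ and ζ·γ = α, and γ 𝓡 β means there exist χ', ζ' with γ·χ' = β and β·ζ' = γ). -/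
/-! An element of `𝓘↗∞(ℤ)` is the same thing as an order isomorphism between two cofinite subsets
of `ℤ`. Composing such isomorphisms, two elements with the same range are `𝓛`-related and two
elements with the same domain are `𝓡`-related. Every cofinite subset of `ℤ` is order-isomorphic
to `ℤ`, so some `γ` has the domain of `β` and the range of `α`; then `α 𝓛 γ 𝓡 β`. -/

theorem Set.Finite.nonempty_orderIso_int {S : Set ℤ} (hS : Sᶜ.Finite) : Nonempty (S ≃o ℤ) := by
  classical
  have exists_mem_of_infinite {I : Set ℤ} (hI : I.Infinite) : ∃ y ∈ I, y ∈ S := by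
    obtain ⟨y, hyI, hyS⟩ := (hI.sdiff hS).nonempty
    exact ⟨y, hyI, not_not.1 hyS⟩
  let := LinearLocallyFiniteOrder.succOrder S
  let := LinearLocallyFiniteOrder.predOrder S
  have : NoMaxOrder S := ⟨fun x => by
    obtain ⟨y, hxy, hy⟩ := exists_mem_of_infinite (Set.Ioi_infinite (x : ℤ))
    exact ⟨⟨y, hy⟩, hxy⟩⟩
  have : NoMinOrder S := ⟨fun x => by
    obtain ⟨y, hyx, hy⟩ := exists_mem_of_infinite (Set.Iio_infinite (x : ℤ))
    exact ⟨⟨y, hy⟩, hyx⟩⟩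
  have : Nonempty S := by
    obtain ⟨y, -, hy⟩ := exists_mem_of_infinite Set.infinite_univ
    exact ⟨⟨y, hy⟩⟩
  exact ⟨orderIsoIntOfLinearSuccPredArch⟩

namespace IZ

@[ext]
theorem ext {a b : IZ} (h : ∀ x, a.1 x = b.1 x) : a = b :=
  Subtype.ext (funext h)

theorem mul_apply (a b : IZ) (x : ℤ) : (a * b).1 x = (a.1 x).bind b.1 := rfl

theorem compl_dom_finite (a : IZ) : a.domᶜ.Finite := by
  simpa [dom, Set.compl_ofPred] using a.2.cofin_dom

theorem compl_ran_finite (a : IZ) : a.ranᶜ.Finite := by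
  simpa [ran, Set.compl_ofPred] using a.2.cofin_ran

theorem apply_of_notMem_dom {a : IZ} {x : ℤ} (hx : x ∉ a.dom) : a.1 x = none :=
  not_not.1 hx

def valOn (a : IZ) (x : a.dom) : ℤ := (a.1 x).get (Option.isSome_iff_ne_none.2 x.2)

theorem apply_coe_dom (a : IZ) (x : a.dom) : a.1 x = some (a.valOn x) :=
  (Option.some_get _).symm

theorem strictMono_valOn (a : IZ) : StrictMono a.valOn := fun x y hxy =>
  lt_of_le_of_ne (a.2.mono (a.apply_coe_dom x) (a.apply_coe_dom y) hxy.le) fun h =>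
    hxy.ne (Subtype.ext (a.2.inj (a.apply_coe_dom x) (h ▸ a.apply_coe_dom y)))

theorem valOn_mem_ran (a : IZ) (x : a.dom) : a.valOn x ∈ a.ran := ⟨x, a.apply_coe_dom x⟩

noncomputable def toOrderIso (a : IZ) : a.dom ≃o a.ran :=
  StrictMono.orderIsoOfSurjective (fun x => ⟨a.valOn x, a.valOn_mem_ran x⟩)
    (fun _ _ hxy => a.strictMono_valOn hxy) fun y => by
      obtain ⟨x, hx⟩ := y.2
      refine ⟨⟨x, by simp [dom, hx]⟩, Subtype.ext (Option.some_injective _ ?_)⟩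
      rw [← a.apply_coe_dom, hx]

theorem apply_eq_toOrderIso (a : IZ) {x : ℤ} (hx : x ∈ a.dom) :
    a.1 x = some (a.toOrderIso ⟨x, hx⟩) :=
  a.apply_coe_dom ⟨x, hx⟩

section OfOrderIso

variable {S T : Set ℤ} (e : S ≃o T)

open scoped Classical in
noncomputable def ofOrderIsoFun (x : ℤ) : Option ℤ :=
  if h : x ∈ S then some (e ⟨x, h⟩ : ℤ) else none

theorem ofOrderIsoFun_eq_some {x y : ℤ} :
    ofOrderIsoFun e x = some y ↔ ∃ h : x ∈ S, (e ⟨x, h⟩ : ℤ) = y := by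
  unfold ofOrderIsoFun
  split_ifs with h <;> simp [h]

theorem ofOrderIsoFun_eq_none {x : ℤ} : ofOrderIsoFun e x = none ↔ x ∉ S := by
  unfold ofOrderIsoFun
  split_ifs with h <;> simp [h]

theorem exists_ofOrderIsoFun_eq_some {y : ℤ} : (∃ x, ofOrderIsoFun e x = some y) ↔ y ∈ T := by
  simp only [ofOrderIsoFun_eq_some]
  refine ⟨fun ⟨x, hx, hxy⟩ => hxy ▸ (e ⟨x, hx⟩).2, fun hy => ?_⟩
  exact ⟨e.symm ⟨y, hy⟩, (e.symm ⟨y, hy⟩).2, by simp⟩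

theorem isMIP_ofOrderIsoFun (hS : Sᶜ.Finite) (hT : Tᶜ.Finite) : IsMIP (ofOrderIsoFun e) where
  inj x y a hx hy := by
    obtain ⟨hxS, rfl⟩ := (ofOrderIsoFun_eq_some e).1 hx
    obtain ⟨hyS, hxy⟩ := (ofOrderIsoFun_eq_some e).1 hy
    simpa using e.injective (Subtype.ext hxy.symm)
  mono x y a b hx hy hxy := by
    obtain ⟨hxS, rfl⟩ := (ofOrderIsoFun_eq_some e).1 hx
    obtain ⟨hyS, rfl⟩ := (ofOrderIsoFun_eq_some e).1 hy
    exact e.monotone (show (⟨x, hxS⟩ : S) ≤ ⟨y, hyS⟩ from hxy)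
  cofin_dom := by simpa [ofOrderIsoFun_eq_none, Set.compl_def] using hS
  cofin_ran := by
    simpa [← not_exists, exists_ofOrderIsoFun_eq_some, Set.compl_def] using hT

variable (hS : Sᶜ.Finite) (hT : Tᶜ.Finite)

noncomputable def ofOrderIso : IZ := ⟨ofOrderIsoFun e, isMIP_ofOrderIsoFun e hS hT⟩

theorem ofOrderIso_apply_coe (x : S) : (ofOrderIso e hS hT).1 x = some (e x) :=
  dif_pos x.2

theorem ofOrderIso_apply_of_notMem {x : ℤ} (hx : x ∉ S) : (ofOrderIso e hS hT).1 x = none :=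
  dif_neg hx

theorem dom_ofOrderIso : (ofOrderIso e hS hT).dom = S :=
  Set.ext fun _ => (ofOrderIsoFun_eq_none e).not_left

theorem ran_ofOrderIso : (ofOrderIso e hS hT).ran = T :=
  Set.ext fun _ => exists_ofOrderIsoFun_eq_some e

end OfOrderIso

theorem exists_dom_eq_and_ran_eq {S T : Set ℤ} (hS : Sᶜ.Finite) (hT : Tᶜ.Finite) :
    ∃ γ : IZ, γ.dom = S ∧ γ.ran = T := by
  obtain ⟨eS⟩ := hS.nonempty_orderIso_int
  obtain ⟨eT⟩ := hT.nonempty_orderIso_int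
  exact ⟨ofOrderIso (eS.trans eT.symm) hS hT, dom_ofOrderIso .., ran_ofOrderIso ..⟩

theorem exists_mul_eq_of_ran_eq {a b : IZ} (h : a.ran = b.ran) : ∃ χ : IZ, χ * a = b := by
  refine ⟨ofOrderIso (b.toOrderIso.trans ((OrderIso.setCongr _ _ h.symm).trans a.toOrderIso.symm))
    b.compl_dom_finite a.compl_dom_finite, ?_⟩
  ext x : 1
  rw [mul_apply]
  by_cases hx : x ∈ b.dom
  · lift x to b.dom using hx
    simp [ofOrderIso_apply_coe, apply_eq_toOrderIso]
  · simp [ofOrderIso_apply_of_notMem _ _ _ hx, apply_of_notMem_dom hx]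

theorem exists_mul_eq_of_dom_eq {a b : IZ} (h : a.dom = b.dom) : ∃ χ : IZ, a * χ = b := by
  refine ⟨ofOrderIso (a.toOrderIso.symm.trans ((OrderIso.setCongr _ _ h).trans b.toOrderIso))
    a.compl_ran_finite b.compl_ran_finite, ?_⟩
  ext x : 1
  rw [mul_apply]
  by_cases hx : x ∈ a.dom
  · lift x to a.dom using hx
    have hxb : (x : ℤ) ∈ b.dom := h ▸ x.2
    simp [ofOrderIso_apply_coe, apply_eq_toOrderIso, b.apply_eq_toOrderIso hxb]
  · simp [apply_of_notMem_dom hx, apply_of_notMem_dom (h ▸ hx : x ∉ b.dom)]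

end IZ

/-- The monoid `𝓘↗∞(ℤ)` is bisimple: any two elements `α, β` are Green
`𝓓`-equivalent, i.e. there is `γ` with `α 𝓛 γ` and `γ 𝓡 β`. -/
theorem statement10 (α β : IZ) :
    ∃ γ : IZ, (∃ χ ζ : IZ, χ * α = γ ∧ ζ * γ = α) ∧
      (∃ χ' ζ' : IZ, γ * χ' = β ∧ β * ζ' = γ) := by
  obtain ⟨γ, hdom, hran⟩ := IZ.exists_dom_eq_and_ran_eq β.compl_dom_finite α.compl_ran_finite
  obtain ⟨χ, hχ⟩ := IZ.exists_mul_eq_of_ran_eq hran.symm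
  obtain ⟨ζ, hζ⟩ := IZ.exists_mul_eq_of_ran_eq hran
  obtain ⟨χ', hχ'⟩ := IZ.exists_mul_eq_of_dom_eq hdom
  obtain ⟨ζ', hζ'⟩ := IZ.exists_mul_eq_of_dom_eq hdom.symm
  exact ⟨γ, ⟨χ, ζ, hχ, hζ⟩, χ', ζ', hχ', hζ'⟩
end
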